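/- arXiv:2512.05024 — 3 statements merged into one kernel-verified Lean document; each statement's English description precedes it below -/
import Mathlib

section
/- Let X_1,…,X_n be i.i.d. from the density p_θ of a one-parameter canonical exponential family, and let T̄_n = (1/n)·Σ_{i=1}^n T(X_i). For each attainable value t of T̄_n, let θ_t be the unique canonical parameter with μ(θ_t) = t. Then for any ε > 0, ℙ( D(p_{θ_{T̄_n}} ‖ p_θ) > ε ) ≤ 2·e^{−nε}. -/
open MeasureTheory Real

/-- Log-partition function `A(θ) = log ∫ e^{θ·T(x)} h(x) dν(x)` of a one-parameter canonical
exponential family. -/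
noncomputable def expFamA {X : Type*} [MeasurableSpace X] (ν : Measure X)
    (T h : X → ℝ) (θ : ℝ) : ℝ :=
  Real.log (∫ x, Real.exp (θ * T x) * h x ∂ν)

/-- Density `p_θ(x) = exp(θ·T(x) − A(θ))·h(x)` of the one-parameter canonical exponential
family with respect to the base measure `ν`. -/
noncomputable def expFamPdf {X : Type*} [MeasurableSpace X] (ν : Measure X)
    (T h : X → ℝ) (θ : ℝ) (x : X) : ℝ :=
  Real.exp (θ * T x - expFamA ν T h θ) * h x

/-- Mean map `μ(θ) = E_θ[T(X)] = ∫ T(x)·p_θ(x) dν(x)`. -/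
noncomputable def expFamMean {X : Type*} [MeasurableSpace X] (ν : Measure X)
    (T h : X → ℝ) (θ : ℝ) : ℝ :=
  ∫ x, T x * expFamPdf ν T h θ x ∂ν

/-- Kullback–Leibler divergence `D(p_{θ₁} ‖ p_{θ₂}) = ∫ log(p_{θ₁}/p_{θ₂})·p_{θ₁} dν`. -/
noncomputable def expFamKL {X : Type*} [MeasurableSpace X] (ν : Measure X)
    (T h : X → ℝ) (θ₁ θ₂ : ℝ) : ℝ :=
  ∫ x, Real.log (expFamPdf ν T h θ₁ x / expFamPdf ν T h θ₂ x) * expFamPdf ν T h θ₁ x ∂ν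

open ProbabilityTheory

/-! With `λ̂ = θ̂ − θ` and `S = ∑ T(Xᵢ)`, the moment equation `E_θ̂ T = S/n` turns the
divergence into `n·D(p_θ̂ ‖ p_θ) = λ̂·S − n(A(θ + λ̂) − A(θ))`, and `n(A(θ + λ) − A(θ))` is the
cumulant generating function of `S` at every `λ` with `θ + λ ∈ Θ`. So `D > ε` forces
`λS − log E e^{λS} ≥ nε` for some such `λ`. For a fixed `λ ≥ 0` this is a Chernoff bound; the
union over all `λ ≥ 0` is a union of nested upper tails `{S ≥ s}`, hence still of probability at
most `e^{−nε}`. The case `λ ≤ 0` is symmetric and gives the factor `2`. -/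

open scoped ENNReal

section Chernoff

variable {Ω : Type*} [MeasurableSpace Ω] {μ : Measure Ω}

lemma measure_preimage_le_of_forall_measure_ge_le {Y : Ω → ℝ} {U : Set ℝ} {B : ℝ≥0∞}
    (hU : ∀ s ∈ U, μ {ω | s ≤ Y ω} ≤ B) : μ (Y ⁻¹' U) ≤ B := by
  by_cases hmin : ∃ s ∈ U, ∀ u ∈ U, s ≤ u
  · obtain ⟨s, hs, hsU⟩ := hmin
    exact (measure_mono fun ω (hω : Y ω ∈ U) => (hsU _ hω : s ≤ Y ω)).trans (hU s hs)
  push Not at hmin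
  -- without a least element, `U` is covered by countably many nested upper rays
  set Q : Set ℚ := {q | ∃ s ∈ U, s ≤ q}
  have hcover : Y ⁻¹' U ⊆ ⋃ q ∈ Q, {ω | (q : ℝ) ≤ Y ω} := by
    intro ω hω
    obtain ⟨u, hu, hlt⟩ := hmin _ hω
    obtain ⟨q, huq, hqY⟩ := exists_rat_btwn hlt
    exact Set.mem_biUnion ⟨u, hu, huq.le⟩ hqY.le
  have hdir : DirectedOn (Function.onFun (· ⊆ ·) fun q : ℚ => {ω | (q : ℝ) ≤ Y ω}) Q := by
    intro q₁ hq₁ q₂ hq₂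
    have hsub {a b : ℚ} (hab : a ≤ b) : {ω | (b : ℝ) ≤ Y ω} ⊆ {ω | (a : ℝ) ≤ Y ω} :=
      fun ω (hω : (b : ℝ) ≤ Y ω) => (Rat.cast_le.mpr hab).trans hω
    rcases le_total q₁ q₂ with h | h
    · exact ⟨q₁, hq₁, subset_rfl, hsub h⟩
    · exact ⟨q₂, hq₂, hsub h, subset_rfl⟩
  calc μ (Y ⁻¹' U) ≤ μ (⋃ q ∈ Q, {ω | (q : ℝ) ≤ Y ω}) := measure_mono hcover
    _ = ⨆ q ∈ Q, μ {ω | (q : ℝ) ≤ Y ω} := measure_biUnion_eq_iSup Q.to_countable hdir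
    _ ≤ B := by
      refine iSup₂_le fun q ⟨s, hs, hsq⟩ => ?_
      exact (measure_mono fun ω (hω : (q : ℝ) ≤ Y ω) => hsq.trans hω).trans (hU s hs)

variable [IsFiniteMeasure μ] {Y : Ω → ℝ} {L : Set ℝ} {Λ : ℝ → ℝ}

lemma measure_exists_le_mul_sub_le_of_nonneg (c : ℝ)
    (hL : ∀ t ∈ L, 0 ≤ t ∧ Integrable (fun ω => exp (t * Y ω)) μ ∧ mgf Y μ t = exp (Λ t)) :
    μ {ω | ∃ t ∈ L, c ≤ t * Y ω - Λ t} ≤ ENNReal.ofReal (exp (-c)) := by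
  refine measure_preimage_le_of_forall_measure_ge_le (U := {s | ∃ t ∈ L, c ≤ t * s - Λ t}) ?_
  rintro s ⟨t, ht, hc⟩
  obtain ⟨ht0, hint, hmgf⟩ := hL t ht
  rw [← ofReal_measureReal]
  refine ENNReal.ofReal_le_ofReal ((measure_ge_le_exp_mul_mgf s ht0 hint).trans ?_)
  rw [hmgf, ← exp_add]
  exact exp_le_exp.mpr (by linarith)

lemma measure_exists_le_mul_sub_le (c : ℝ)
    (hL : ∀ t ∈ L, Integrable (fun ω => exp (t * Y ω)) μ ∧ mgf Y μ t = exp (Λ t)) :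
    μ {ω | ∃ t ∈ L, c ≤ t * Y ω - Λ t} ≤ ENNReal.ofReal (2 * exp (-c)) := by
  have hupper := measure_exists_le_mul_sub_le_of_nonneg (μ := μ) (Y := Y)
    (L := L ∩ Set.Ici 0) (Λ := Λ) c fun t ht => ⟨ht.2, hL t ht.1⟩
  have hlower := measure_exists_le_mul_sub_le_of_nonneg (μ := μ) (Y := -Y)
    (L := Neg.neg ⁻¹' L ∩ Set.Ici 0) (Λ := fun t => Λ (-t)) c fun t ht => by
      obtain ⟨hint, hmgf⟩ := hL (-t) ht.1
      refine ⟨ht.2, by simpa only [Pi.neg_apply, mul_neg, neg_mul] using hint, ?_⟩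
      rw [mgf_neg, hmgf]
  have hsplit : {ω | ∃ t ∈ L, c ≤ t * Y ω - Λ t} ⊆
      {ω | ∃ t ∈ L ∩ Set.Ici 0, c ≤ t * Y ω - Λ t} ∪
        {ω | ∃ t ∈ Neg.neg ⁻¹' L ∩ Set.Ici 0, c ≤ t * (-Y) ω - Λ (-t)} := by
    rintro ω ⟨t, ht, hc⟩
    rcases le_total 0 t with h | h
    · exact Or.inl ⟨t, ⟨ht, h⟩, hc⟩
    · refine Or.inr ⟨-t, ⟨by simpa using ht, neg_nonneg.mpr h⟩, ?_⟩
      simpa using hc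
  calc _ ≤ _ := measure_mono hsplit
    _ ≤ _ := measure_union_le _ _
    _ ≤ ENNReal.ofReal (exp (-c)) + ENNReal.ofReal (exp (-c)) := add_le_add hupper hlower
    _ = ENNReal.ofReal (2 * exp (-c)) := by
      rw [← ENNReal.ofReal_add (exp_nonneg _) (exp_nonneg _), two_mul]

end Chernoff

section WithDensity

variable {X : Type*} [MeasurableSpace X] {ν : Measure X} {p : X → ℝ}

lemma integrable_withDensity_ofReal_iff (hp : Measurable p) (hp0 : ∀ x, 0 ≤ p x) {g : X → ℝ} :
    Integrable g (ν.withDensity fun x => ENNReal.ofReal (p x)) ↔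
      Integrable (fun x => g x * p x) ν := by
  rw [integrable_withDensity_iff_integrable_smul' hp.ennreal_ofReal
    (ae_of_all _ fun _ => ENNReal.ofReal_lt_top)]
  simp only [ENNReal.toReal_ofReal (hp0 _), smul_eq_mul, mul_comm]

lemma integral_withDensity_ofReal (hp : Measurable p) (hp0 : ∀ x, 0 ≤ p x) (g : X → ℝ) :
    ∫ x, g x ∂ν.withDensity (fun x => ENNReal.ofReal (p x)) = ∫ x, g x * p x ∂ν := by
  rw [integral_withDensity_eq_integral_toReal_smul hp.ennreal_ofReal
    (ae_of_all _ fun _ => ENNReal.ofReal_lt_top)]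
  simp only [ENNReal.toReal_ofReal (hp0 _), smul_eq_mul, mul_comm]

end WithDensity

section ExpFam

variable {X : Type*} [MeasurableSpace X] {ν : Measure X} {T h : X → ℝ}

lemma expFamPdf_nonneg (hh0 : ∀ x, 0 ≤ h x) (θ : ℝ) (x : X) : 0 ≤ expFamPdf ν T h θ x :=
  mul_nonneg (exp_nonneg _) (hh0 x)

lemma measurable_expFamPdf (hT : Measurable T) (hh : Measurable h) (θ : ℝ) :
    Measurable (expFamPdf ν T h θ) := by
  unfold expFamPdf; fun_prop

lemma exp_mul_mul_expFamPdf (θ t : ℝ) (x : X) :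
    exp (t * T x) * expFamPdf ν T h θ x =
      exp (-expFamA ν T h θ) * (exp ((θ + t) * T x) * h x) := by
  rw [expFamPdf, ← mul_assoc, ← mul_assoc, ← exp_add, ← exp_add]
  ring_nf

lemma integrable_exp_mul_mul_expFamPdf {θ t : ℝ}
    (hint : Integrable (fun x => exp ((θ + t) * T x) * h x) ν) :
    Integrable (fun x => exp (t * T x) * expFamPdf ν T h θ x) ν := by
  simpa only [exp_mul_mul_expFamPdf] using hint.const_mul _

lemma integral_exp_mul_mul_expFamPdf {θ t : ℝ}
    (hpos : 0 < ∫ x, exp ((θ + t) * T x) * h x ∂ν) :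
    ∫ x, exp (t * T x) * expFamPdf ν T h θ x ∂ν =
      exp (expFamA ν T h (θ + t) - expFamA ν T h θ) := by
  simp only [exp_mul_mul_expFamPdf, integral_const_mul]
  rw [← exp_log hpos, ← expFamA, ← exp_add, neg_add_eq_sub]

lemma integral_expFamPdf {θ : ℝ} (hpos : 0 < ∫ x, exp (θ * T x) * h x ∂ν) :
    ∫ x, expFamPdf ν T h θ x ∂ν = 1 := by
  simpa using integral_exp_mul_mul_expFamPdf (θ := θ) (t := 0) (by simpa using hpos)

lemma integrable_mul_expFamPdf (hh : Measurable h) (hh0 : ∀ x, 0 ≤ h x)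
    {θ : ℝ} (hθ : θ ∈ interior {t | Integrable (fun x => exp (t * T x) * h x) ν}) :
    Integrable (fun x => T x * expFamPdf ν T h θ x) ν := by
  have hset : {t | Integrable (fun x => exp (t * T x) * h x) ν} =
      integrableExpSet T (ν.withDensity fun x => ENNReal.ofReal (h x)) := by
    ext t
    exact (integrable_withDensity_ofReal_iff hh hh0).symm
  rw [hset] at hθ
  have := (integrable_withDensity_ofReal_iff hh hh0).mp
    (integrable_pow_mul_exp_of_mem_interior_integrableExpSet hθ 1)
  refine (this.const_mul (exp (-expFamA ν T h θ))).congr (ae_of_all _ fun x => ?_)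
  simp only [expFamPdf, pow_one, sub_eq_add_neg, exp_add]
  ring

lemma expFamKL_eq (hh : Measurable h) (hh0 : ∀ x, 0 ≤ h x) {θ₁ : ℝ}
    (hθ₁ : θ₁ ∈ interior {t | Integrable (fun x => exp (t * T x) * h x) ν})
    (hpos : 0 < ∫ x, exp (θ₁ * T x) * h x ∂ν) (θ₂ : ℝ) :
    expFamKL ν T h θ₁ θ₂ =
      (θ₁ - θ₂) * expFamMean ν T h θ₁ - (expFamA ν T h θ₁ - expFamA ν T h θ₂) := by
  have hlog : ∀ x, log (expFamPdf ν T h θ₁ x / expFamPdf ν T h θ₂ x) * expFamPdf ν T h θ₁ x =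
      (θ₁ - θ₂) * (T x * expFamPdf ν T h θ₁ x) -
        (expFamA ν T h θ₁ - expFamA ν T h θ₂) * expFamPdf ν T h θ₁ x := by
    intro x
    rcases (hh0 x).eq_or_lt with hx | hx
    · simp [expFamPdf, ← hx]
    · rw [expFamPdf, expFamPdf, mul_div_mul_right _ _ hx.ne', ← exp_sub, log_exp]
      ring
  have hint₁ : Integrable (expFamPdf ν T h θ₁) ν := by
    simpa using integrable_exp_mul_mul_expFamPdf (θ := θ₁) (t := 0)
      (by simpa using interior_subset hθ₁)
  rw [expFamKL, integral_congr_ae (ae_of_all _ hlog),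
    integral_sub ((integrable_mul_expFamPdf hh hh0 hθ₁).const_mul _) (hint₁.const_mul _),
    integral_const_mul, integral_const_mul, integral_expFamPdf hpos, expFamMean, mul_one]

end ExpFam

section Sample

variable {X : Type*} [MeasurableSpace X] {ν : Measure X} {T h : X → ℝ}
  {Ω : Type*} [MeasurableSpace Ω] {μ : Measure Ω} {θ t : ℝ}

lemma integrable_exp_mul_comp_of_map_eq_expFam (hT : Measurable T) (hh : Measurable h)
    (hh0 : ∀ x, 0 ≤ h x) {f : Ω → X} (hf : Measurable f)
    (hlaw : μ.map f = ν.withDensity fun x => ENNReal.ofReal (expFamPdf ν T h θ x))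
    (hint : Integrable (fun x => exp ((θ + t) * T x) * h x) ν) :
    Integrable (fun ω => exp (t * T (f ω))) μ := by
  refine (integrable_map_measure (g := fun x => exp (t * T x))
    (hT.const_mul t).exp.aestronglyMeasurable hf.aemeasurable).mp ?_
  rw [hlaw, integrable_withDensity_ofReal_iff (measurable_expFamPdf hT hh θ)
    (expFamPdf_nonneg hh0 θ)]
  exact integrable_exp_mul_mul_expFamPdf hint

lemma mgf_comp_of_map_eq_expFam (hT : Measurable T) (hh : Measurable h)
    (hh0 : ∀ x, 0 ≤ h x) {f : Ω → X} (hf : Measurable f)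
    (hlaw : μ.map f = ν.withDensity fun x => ENNReal.ofReal (expFamPdf ν T h θ x))
    (hpos : 0 < ∫ x, exp ((θ + t) * T x) * h x ∂ν) :
    mgf (fun ω => T (f ω)) μ t = exp (expFamA ν T h (θ + t) - expFamA ν T h θ) := by
  refine (integral_map (f := fun x => exp (t * T x)) hf.aemeasurable
    (hT.const_mul t).exp.aestronglyMeasurable).symm.trans ?_
  rw [hlaw, integral_withDensity_ofReal (measurable_expFamPdf hT hh θ) (expFamPdf_nonneg hh0 θ)]
  exact integral_exp_mul_mul_expFamPdf hpos

lemma mgf_sum_of_iid_expFam (hT : Measurable T) (hh : Measurable h) (hh0 : ∀ x, 0 ≤ h x)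
    {ι : Type*} [Fintype ι] {Xs : ι → Ω → X} (hXs : ∀ i, Measurable (Xs i))
    (hiid : iIndepFun Xs μ)
    (hlaw : ∀ i, μ.map (Xs i) = ν.withDensity fun x => ENNReal.ofReal (expFamPdf ν T h θ x))
    (hint : Integrable (fun x => exp ((θ + t) * T x) * h x) ν)
    (hpos : 0 < ∫ x, exp ((θ + t) * T x) * h x ∂ν) :
    Integrable (fun ω => exp (t * ∑ i, T (Xs i ω))) μ ∧
      mgf (fun ω => ∑ i, T (Xs i ω)) μ t =
        exp (Fintype.card ι * (expFamA ν T h (θ + t) - expFamA ν T h θ)) := by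
  have hindep : iIndepFun (fun i ω => T (Xs i ω)) μ := hiid.comp (fun _ => T) fun _ => hT
  have hsum : (fun ω => ∑ i, T (Xs i ω)) = ∑ i, fun ω => T (Xs i ω) := by
    ext ω; simp
  have hmeas : ∀ i, Measurable fun ω => T (Xs i ω) := fun i => hT.comp (hXs i)
  have : IsProbabilityMeasure μ := hiid.isProbabilityMeasure
  refine ⟨by simpa only [Finset.sum_apply] using hindep.integrable_exp_mul_sum hmeas fun i _ =>
    integrable_exp_mul_comp_of_map_eq_expFam hT hh hh0 (hXs i) (hlaw i) hint, ?_⟩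
  rw [hsum, hindep.mgf_sum hmeas, Finset.prod_congr rfl fun i _ =>
    mgf_comp_of_map_eq_expFam hT hh hh0 (hXs i) (hlaw i) hpos, Finset.prod_const,
    ← exp_nat_mul, Finset.card_univ]

end Sample

theorem expFam_chernoff_hoeffding_general
    {X : Type*} [MeasurableSpace X] (ν : Measure X)
    (T h : X → ℝ) (hT : Measurable T) (hh : Measurable h) (hh0 : ∀ x, 0 ≤ h x)
    -- the parameter set is an open interval
    (ΘS : Set ℝ) (hΘopen : IsOpen ΘS)
    -- the log-partition function is finite on the parameter set
    (hint : ∀ θ' ∈ ΘS, Integrable (fun x => Real.exp (θ' * T x) * h x) ν)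
    (hpos : ∀ θ' ∈ ΘS, 0 < ∫ x, Real.exp (θ' * T x) * h x ∂ν)
    -- the true parameter
    (θ : ℝ)
    -- i.i.d. samples from `p_θ`
    {Ω : Type*} [MeasurableSpace Ω] (μ : Measure Ω) [IsProbabilityMeasure μ]
    (n : ℕ) (hn : 0 < n) (Xs : Fin n → Ω → X) (hXsmeas : ∀ i, Measurable (Xs i))
    (hiid : iIndepFun Xs μ)
    (hlaw : ∀ i, μ.map (Xs i) =
      ν.withDensity (fun x => ENNReal.ofReal (expFamPdf ν T h θ x)))
    -- every realized value of `T̄_n` is attainable, with canonical parameter `θof (T̄_n)`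
    (θof : ℝ → ℝ)
    (hθof : ∀ ω, θof ((∑ i, T (Xs i ω)) / n) ∈ ΘS ∧
      expFamMean ν T h (θof ((∑ i, T (Xs i ω)) / n)) = (∑ i, T (Xs i ω)) / n) :
    ∀ ε > (0 : ℝ),
      μ {ω | ε < expFamKL ν T h (θof ((∑ i, T (Xs i ω)) / n)) θ} ≤
        ENNReal.ofReal (2 * Real.exp (-(n : ℝ) * ε)) := by
  intro ε _
  have hΘ : ΘS ⊆ interior {t | Integrable (fun x => exp (t * T x) * h x) ν} :=
    hΘopen.subset_interior_iff.mpr hint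
  have hevent : {ω | ε < expFamKL ν T h (θof ((∑ i, T (Xs i ω)) / n)) θ} ⊆
      {ω | ∃ t ∈ {t | θ + t ∈ ΘS}, n * ε ≤
        t * ∑ i, T (Xs i ω) - n * (expFamA ν T h (θ + t) - expFamA ν T h θ)} := by
    intro ω hω
    obtain ⟨hmem, hmean⟩ := hθof ω
    refine ⟨θof ((∑ i, T (Xs i ω)) / n) - θ, by simpa using hmem, ?_⟩
    rw [Set.mem_ofPred_eq] at hω
    generalize ∑ i, T (Xs i ω) = S at hω hmem hmean ⊢
    rw [expFamKL_eq hh hh0 (hΘ hmem) (hpos _ hmem), hmean] at hω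
    have hn' : (0 : ℝ) < n := Nat.cast_pos.mpr hn
    calc (n : ℝ) * ε ≤ n * ((θof (S / n) - θ) * (S / n) -
          (expFamA ν T h (θof (S / n)) - expFamA ν T h θ)) := by gcongr
      _ = _ := by rw [add_sub_cancel]; field_simp
  calc _ ≤ _ := measure_mono hevent
    _ ≤ ENNReal.ofReal (2 * exp (-(n * ε))) :=
      measure_exists_le_mul_sub_le _ fun t ht => by
        simpa using mgf_sum_of_iid_expFam hT hh hh0 hXsmeas hiid hlaw (hint _ ht) (hpos _ ht)
    _ = _ := by rw [neg_mul]

/-- **Chernoff–Hoeffding bound for one-parameter exponential families.**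
Let `X_1,…,X_n` be i.i.d. from the density `p_θ` of a one-parameter canonical exponential
family, `T̄_n = (1/n)·Σ_i T(X_i)`, and for each attainable value `t` of `T̄_n` let `θ_t` be
the unique canonical parameter with `μ(θ_t) = t`.  Then for any `ε > 0`,
`ℙ(D(p_{θ_{T̄_n}} ‖ p_θ) > ε) ≤ 2·e^{−nε}`. -/
theorem expFam_chernoff_hoeffding
    {X : Type*} [MeasurableSpace X] (ν : Measure X) [SigmaFinite ν]
    (T h : X → ℝ) (hT : Measurable T) (hh : Measurable h) (hh0 : ∀ x, 0 ≤ h x)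
    -- the parameter set is an open interval
    (ΘS : Set ℝ) (hΘopen : IsOpen ΘS) (hΘconn : ΘS.OrdConnected)
    -- the log-partition function is finite on the parameter set
    (hint : ∀ θ' ∈ ΘS, Integrable (fun x => Real.exp (θ' * T x) * h x) ν)
    (hpos : ∀ θ' ∈ ΘS, 0 < ∫ x, Real.exp (θ' * T x) * h x ∂ν)
    -- `A` is differentiable with `A'(θ) = μ(θ) = E_θ[T(X)]`, and strictly convex (`A'' > 0`)
    (hmean : ∀ θ' ∈ ΘS, HasDerivAt (expFamA ν T h) (expFamMean ν T h θ') θ')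
    (hconv : StrictConvexOn ℝ ΘS (expFamA ν T h))
    -- the true parameter
    (θ : ℝ) (hθ : θ ∈ ΘS)
    -- i.i.d. samples from `p_θ`
    {Ω : Type*} [MeasurableSpace Ω] (μ : Measure Ω) [IsProbabilityMeasure μ]
    (n : ℕ) (hn : 0 < n) (Xs : Fin n → Ω → X) (hXsmeas : ∀ i, Measurable (Xs i))
    (hiid : iIndepFun Xs μ)
    (hlaw : ∀ i, μ.map (Xs i) =
      ν.withDensity (fun x => ENNReal.ofReal (expFamPdf ν T h θ x)))
    -- every realized value of `T̄_n` is attainable, with canonical parameter `θof (T̄_n)`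
    (θof : ℝ → ℝ)
    (hθof : ∀ ω, θof ((∑ i, T (Xs i ω)) / n) ∈ ΘS ∧
      expFamMean ν T h (θof ((∑ i, T (Xs i ω)) / n)) = (∑ i, T (Xs i ω)) / n) :
    ∀ ε > (0 : ℝ),
      μ {ω | ε < expFamKL ν T h (θof ((∑ i, T (Xs i ω)) / n)) θ} ≤
        ENNReal.ofReal (2 * Real.exp (-(n : ℝ) * ε)) :=
  expFam_chernoff_hoeffding_general ν T h hT hh hh0 ΘS hΘopen hint hpos θ μ n hn Xs hXsmeas hiid
    hlaw θof hθof
end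

section
/- Let X_1,…,X_n be i.i.d. Bernoulli random variables with mean p ∈ (0,1) and empirical mean p̂ = (1/n)·Σ_{i=1}^n X_i. For any γ ∈ (0,1), the confidence set C(p̂) = { u ∈ [0,1] : KL(p̂ ‖ u) ≤ (1/n)·log(2/(1−γ)) } satisfies ℙ( p ∈ C(p̂) ) ≥ γ. -/
/-!
Chernoff's bound with the optimal parameter gives `ℙ(p̂ ≥ q) ≤ exp(-n·KL(q ‖ p))` for `q > p`.
Since `p̂` takes finitely many values, the event `{p̂ > p, KL(p̂ ‖ p) > ε}` is contained in
`{p̂ ≥ q}` for the least attainable `q > p` with `KL(q ‖ p) > ε`, so it has probability at most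
`exp(-n ε)`; the lower tail is the upper tail of the sample `1 - X_i`. For
`ε = log(2/(1-γ))/n` the two tails together have probability at most `1 - γ`.
-/

open MeasureTheory ProbabilityTheory Real

/-- Bernoulli Kullback–Leibler divergence
`KL(a ‖ b) = a·log(a/b) + (1−a)·log((1−a)/(1−b))`, with the conventions `0·log 0 = 0` and
`KL(a ‖ b) = +∞` when `b ∈ {0,1}` and `a ≠ b`. -/
noncomputable def bernKL (a b : ℝ) : ENNReal :=
  if a = b then 0
  else if b = 0 ∨ b = 1 then ⊤
  else ENNReal.ofReal (a * Real.log (a / b) + (1 - a) * Real.log ((1 - a) / (1 - b)))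

noncomputable def bernKLReal (a b : ℝ) : ℝ :=
  a * log (a / b) + (1 - a) * log ((1 - a) / (1 - b))

lemma bernKLReal_one_sub_one_sub (a b : ℝ) : bernKLReal (1 - a) (1 - b) = bernKLReal a b := by
  unfold bernKLReal
  ring_nf

@[simp]
lemma bernKLReal_self (a : ℝ) : bernKLReal a a = 0 := by
  simp [bernKLReal]

lemma bernKL_eq_ofReal_bernKLReal (a : ℝ) {b : ℝ} (hb : b ∈ Set.Ioo 0 1) :
    bernKL a b = ENNReal.ofReal (bernKLReal a b) := by
  unfold bernKL
  split_ifs with hab hb'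
  · simp [hab]
  · exact absurd hb' (by rintro (rfl | rfl) <;> simp at hb)
  · rfl

lemma measure_setOf_le_of_finite_range {α : Type*} [MeasurableSpace α] {μ : Measure α}
    {f : α → ℝ} (hf : (Set.range f).Finite) {P : ℝ → Prop} {c : ENNReal}
    (h : ∀ v ∈ Set.range f, P v → μ {a | v ≤ f a} ≤ c) :
    μ {a | P (f a)} ≤ c := by
  set S := {v ∈ Set.range f | P v}
  rcases S.eq_empty_or_nonempty with hS | hS
  · have : {a | P (f a)} = ∅ := by
      ext a
      simpa using fun ha => hS.subset ⟨⟨a, rfl⟩, ha⟩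
    simp [this]
  obtain ⟨v, ⟨hv, hPv⟩, hmin⟩ := S.exists_min_image id (hf.subset (Set.sep_subset _ _)) hS
  exact (measure_mono fun a ha => hmin (f a) ⟨⟨a, rfl⟩, ha⟩).trans (h v hv hPv)

structure IsBernoulliSample {Ω ι : Type*} [MeasurableSpace Ω] (μ : Measure Ω) (p : ℝ)
    (X : ι → Ω → ℝ) : Prop where
  measurable : ∀ i, Measurable (X i)
  zero_or_one : ∀ i ω, X i ω = 0 ∨ X i ω = 1
  indep : iIndepFun X μ
  measure_eq_one : ∀ i, μ {ω | X i ω = 1} = ENNReal.ofReal p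

noncomputable def sampleMean {Ω ι : Type*} [Fintype ι] (X : ι → Ω → ℝ) (ω : Ω) : ℝ :=
  (∑ i, X i ω) / Fintype.card ι

lemma sampleMean_one_sub {Ω ι : Type*} [Fintype ι] [Nonempty ι] (X : ι → Ω → ℝ) (ω : Ω) :
    sampleMean (fun i ω => 1 - X i ω) ω = 1 - sampleMean X ω := by
  have hN : (Fintype.card ι : ℝ) ≠ 0 := by exact_mod_cast Fintype.card_ne_zero
  simp only [sampleMean, Finset.sum_sub_distrib, Finset.sum_const, Finset.card_univ,
    nsmul_eq_mul, mul_one]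
  field_simp

namespace IsBernoulliSample

variable {Ω ι : Type*} [MeasurableSpace Ω] {μ : Measure Ω} {p : ℝ} {X : ι → Ω → ℝ}

lemma measurableSet_eq_one (hX : IsBernoulliSample μ p X) (i : ι) :
    MeasurableSet {ω | X i ω = 1} :=
  hX.measurable i (measurableSet_singleton 1)

lemma one_sub (hX : IsBernoulliSample μ p X) (hp : 0 ≤ p) :
    IsBernoulliSample μ (1 - p) (fun i ω => 1 - X i ω) where
  measurable i := measurable_const.sub (hX.measurable i)
  zero_or_one i ω := by rcases hX.zero_or_one i ω with h | h <;> simp [h]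
  indep := hX.indep.comp (fun _ x => 1 - x) fun _ => measurable_const.sub measurable_id
  measure_eq_one i := by
    have hset : {ω | 1 - X i ω = 1} = {ω | X i ω = 1}ᶜ := by
      ext ω
      rcases hX.zero_or_one i ω with h | h <;> simp [h]
    have := hX.indep.isProbabilityMeasure
    rw [hset, measure_compl (hX.measurableSet_eq_one i) (measure_ne_top μ _),
      hX.measure_eq_one i, measure_univ, ENNReal.ofReal_sub _ hp, ENNReal.ofReal_one]

lemma exp_mul_eq (hX : IsBernoulliSample μ p X) (i : ι) (t : ℝ) (ω : Ω) :
    exp (t * X i ω) = 1 + (exp t - 1) * X i ω := by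
  rcases hX.zero_or_one i ω with h | h <;> simp [h]

lemma eq_indicator (hX : IsBernoulliSample μ p X) (i : ι) :
    X i = {ω | X i ω = 1}.indicator 1 := by
  funext ω
  rcases hX.zero_or_one i ω with h | h <;> simp [h]

lemma integrable (hX : IsBernoulliSample μ p X) (i : ι) : Integrable (X i) μ := by
  have := hX.indep.isProbabilityMeasure
  rw [hX.eq_indicator i]
  exact (integrable_const 1).indicator (hX.measurableSet_eq_one i)

lemma integral_eq (hX : IsBernoulliSample μ p X) (hp : 0 ≤ p) (i : ι) : ∫ ω, X i ω ∂μ = p := by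
  rw [hX.eq_indicator i, integral_indicator_one (hX.measurableSet_eq_one i),
    measureReal_def, hX.measure_eq_one i, ENNReal.toReal_ofReal hp]

lemma integrable_exp_mul (hX : IsBernoulliSample μ p X) (i : ι) (t : ℝ) :
    Integrable (fun ω => exp (t * X i ω)) μ := by
  have := hX.indep.isProbabilityMeasure
  simp_rw [hX.exp_mul_eq i t]
  exact (integrable_const 1).add ((hX.integrable i).const_mul _)

lemma mgf_eq (hX : IsBernoulliSample μ p X) (hp : 0 ≤ p) (i : ι) (t : ℝ) :
    mgf (X i) μ t = 1 - p + p * exp t := by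
  have := hX.indep.isProbabilityMeasure
  simp_rw [mgf, hX.exp_mul_eq i t]
  rw [integral_add (integrable_const 1) ((hX.integrable i).const_mul _), integral_const_mul,
    hX.integral_eq hp i]
  simp
  ring

variable [Fintype ι]

lemma measureReal_sum_ge_le (hX : IsBernoulliSample μ p X) (hp : 0 ≤ p) {t : ℝ} (ht : 0 ≤ t)
    (a : ℝ) :
    μ.real {ω | a ≤ ∑ i, X i ω} ≤ exp (-t * a) * (1 - p + p * exp t) ^ Fintype.card ι := by
  have := hX.indep.isProbabilityMeasure
  have hchernoff := measure_ge_le_exp_mul_mgf (X := ∑ i, X i) a ht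
    (hX.indep.integrable_exp_mul_sum hX.measurable fun i _ => hX.integrable_exp_mul i t)
  rw [hX.indep.mgf_sum hX.measurable, Finset.prod_congr rfl fun i _ => hX.mgf_eq hp i t,
    Finset.prod_const, Finset.card_univ] at hchernoff
  simpa only [Finset.sum_apply] using hchernoff

lemma measureReal_sum_ge_le_exp_neg_bernKLReal (hX : IsBernoulliSample μ p X) (hp : 0 < p)
    {q : ℝ} (hpq : p < q) (hq : q < 1) :
    μ.real {ω | Fintype.card ι * q ≤ ∑ i, X i ω} ≤
      exp (-(Fintype.card ι * bernKLReal q p)) := by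
  set N := Fintype.card ι
  -- The optimal Chernoff parameter: `exp t = q (1 - p) / (p (1 - q))`.
  have hq0 : 0 < q := hp.trans hpq
  have h1q : 0 < 1 - q := by linarith
  have h1p : 0 < 1 - p := by linarith
  set L₁ := log (q / p)
  set L₂ := log ((1 - q) / (1 - p))
  have hL₁ : 0 ≤ L₁ := log_nonneg ((one_le_div hp).2 hpq.le)
  have hL₂ : L₂ ≤ 0 := log_nonpos (div_pos h1q h1p).le ((div_le_one h1p).2 (by linarith))
  have hmgf : 1 - p + p * exp (L₁ - L₂) = exp (-L₂) := by
    rw [exp_sub, exp_neg, exp_log (div_pos hq0 hp), exp_log (div_pos h1q h1p)]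
    field_simp
    ring
  calc μ.real {ω | N * q ≤ ∑ i, X i ω}
      ≤ exp (-(L₁ - L₂) * (N * q)) * (1 - p + p * exp (L₁ - L₂)) ^ N :=
        hX.measureReal_sum_ge_le hp.le (by linarith) _
    _ = exp (-(N * bernKLReal q p)) := by
        rw [hmgf, ← exp_nat_mul, ← exp_add]
        congr 1
        simp only [bernKLReal, L₁, L₂]
        ring

lemma measure_sum_ge_card_le (hX : IsBernoulliSample μ p X) :
    μ {ω | Fintype.card ι ≤ ∑ i, X i ω} ≤ ENNReal.ofReal p ^ Fintype.card ι := by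
  have hsub : {ω | Fintype.card ι ≤ ∑ i, X i ω} ⊆ ⋂ i, {ω | X i ω = 1} := by
    intro ω hω
    have hle : ∀ i, 0 ≤ 1 - X i ω := fun i => by rcases hX.zero_or_one i ω with h | h <;> simp [h]
    have hsum : ∑ i, (1 - X i ω) = 0 := by
      refine le_antisymm ?_ (Finset.sum_nonneg fun i _ => hle i)
      simp only [Finset.sum_sub_distrib, Finset.sum_const, Finset.card_univ, nsmul_eq_mul, mul_one]
      exact sub_nonpos.2 hω
    have hone := (Finset.sum_eq_zero_iff_of_nonneg fun i _ => hle i).1 hsum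
    exact Set.mem_iInter.2 fun i => (sub_eq_zero.1 (hone i (Finset.mem_univ i))).symm
  calc μ {ω | Fintype.card ι ≤ ∑ i, X i ω} ≤ μ (⋂ i, {ω | X i ω = 1}) := measure_mono hsub
    _ = ∏ i, μ {ω | X i ω = 1} :=
        hX.indep.meas_iInter fun i => ⟨{1}, measurableSet_singleton 1, rfl⟩
    _ = ENNReal.ofReal p ^ Fintype.card ι := by
        simp [hX.measure_eq_one]

lemma sampleMean_le_one (hX : IsBernoulliSample μ p X) (ω : Ω) : sampleMean X ω ≤ 1 := by
  refine div_le_one_of_le₀ ?_ (Nat.cast_nonneg _)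
  calc ∑ i, X i ω ≤ ∑ _i : ι, (1 : ℝ) :=
        Finset.sum_le_sum fun i _ => by rcases hX.zero_or_one i ω with h | h <;> simp [h]
    _ = Fintype.card ι := by simp

lemma finite_range_sampleMean (hX : IsBernoulliSample μ p X) :
    (Set.range (sampleMean X)).Finite := by
  have hvalues : (Set.univ.pi fun _ : ι => ({0, 1} : Set ℝ)).Finite :=
    Set.Finite.pi fun _ => by simp
  refine (hvalues.image fun x : ι → ℝ => (∑ i, x i) / (Fintype.card ι : ℝ)).subset ?_
  rintro _ ⟨ω, rfl⟩
  exact ⟨fun i => X i ω, fun i _ => hX.zero_or_one i ω, rfl⟩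

variable [Nonempty ι]

lemma measure_sampleMean_ge_le (hX : IsBernoulliSample μ p X) (hp : 0 < p) {q : ℝ}
    (hpq : p < q) (hq : q ≤ 1) :
    μ {ω | q ≤ sampleMean X ω} ≤ ENNReal.ofReal (exp (-(Fintype.card ι * bernKLReal q p))) := by
  have := hX.indep.isProbabilityMeasure
  have hN : (0 : ℝ) < Fintype.card ι := by exact_mod_cast Fintype.card_pos
  have hset : {ω | q ≤ sampleMean X ω} = {ω | Fintype.card ι * q ≤ ∑ i, X i ω} := by
    ext ω
    simp only [sampleMean, Set.mem_ofPred_eq, le_div_iff₀ hN, mul_comm]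
  rw [hset]
  rcases hq.lt_or_eq with hq | rfl
  · rw [← ofReal_measureReal]
    exact ENNReal.ofReal_le_ofReal (hX.measureReal_sum_ge_le_exp_neg_bernKLReal hp hpq hq)
  · -- At `q = 1` the optimal Chernoff parameter is `t = ∞`; use independence directly.
    have hkl : bernKLReal 1 p = -log p := by simp [bernKLReal]
    rw [hkl, mul_neg, neg_neg, exp_nat_mul, exp_log hp, ENNReal.ofReal_pow hp.le, mul_one]
    exact hX.measure_sum_ge_card_le

lemma measure_lt_sampleMean_and_lt_bernKLReal_le (hX : IsBernoulliSample μ p X) (hp : 0 < p)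
    (ε : ℝ) :
    μ {ω | p < sampleMean X ω ∧ ε < bernKLReal (sampleMean X ω) p} ≤
      ENNReal.ofReal (exp (-(Fintype.card ι * ε))) := by
  refine measure_setOf_le_of_finite_range (P := fun v => p < v ∧ ε < bernKLReal v p)
    hX.finite_range_sampleMean ?_
  rintro _ ⟨ω, rfl⟩ ⟨hpv, hεv⟩
  refine (hX.measure_sampleMean_ge_le hp hpv (hX.sampleMean_le_one ω)).trans ?_
  gcongr

lemma measure_lt_bernKLReal_sampleMean_le (hX : IsBernoulliSample μ p X) (hp : p ∈ Set.Ioo 0 1)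
    {ε : ℝ} (hε : 0 ≤ ε) :
    μ {ω | ε < bernKLReal (sampleMean X ω) p} ≤
      2 * ENNReal.ofReal (exp (-(Fintype.card ι * ε))) := by
  have hY := hX.one_sub hp.1.le
  have hsub : {ω | ε < bernKLReal (sampleMean X ω) p} ⊆
      {ω | p < sampleMean X ω ∧ ε < bernKLReal (sampleMean X ω) p} ∪
      {ω | 1 - p < sampleMean (fun i ω => 1 - X i ω) ω ∧
        ε < bernKLReal (sampleMean (fun i ω => 1 - X i ω) ω) (1 - p)} := by
    intro ω hω
    simp only [Set.mem_union, Set.mem_ofPred_eq, sampleMean_one_sub, bernKLReal_one_sub_one_sub]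
    rcases lt_trichotomy (sampleMean X ω) p with hlt | heq | hgt
    · exact Or.inr ⟨by linarith, hω⟩
    · simp only [Set.mem_ofPred_eq, heq, bernKLReal_self] at hω
      linarith
    · exact Or.inl ⟨hgt, hω⟩
  calc _ ≤ _ := measure_mono hsub
    _ ≤ _ := measure_union_le _ _
    _ ≤ _ := add_le_add (hX.measure_lt_sampleMean_and_lt_bernKLReal_le hp.1 ε)
        (hY.measure_lt_sampleMean_and_lt_bernKLReal_le (sub_pos.2 hp.2) ε)
    _ = _ := (two_mul _).symm

end IsBernoulliSample

theorem bernoulli_confidence_set_general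
    {Ω : Type*} [MeasurableSpace Ω] (μ : Measure Ω)
    (n : ℕ) (hn : 0 < n) (p : ℝ) (hp : p ∈ Set.Ioo (0 : ℝ) 1)
    (X : Fin n → Ω → ℝ) (hXmeas : ∀ i, Measurable (X i))
    (hX01 : ∀ i ω, X i ω = 0 ∨ X i ω = 1)
    (hindep : iIndepFun X μ)
    (hlaw : ∀ i, μ {ω | X i ω = 1} = ENNReal.ofReal p)
    (γ : ℝ) (hγ : γ ∈ Set.Ioo (0 : ℝ) 1) :
    ENNReal.ofReal γ ≤
      μ {ω | p ∈ {u : ℝ | u ∈ Set.Icc (0 : ℝ) 1 ∧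
          bernKL ((∑ i, X i ω) / n) u ≤
            ENNReal.ofReal ((1 / n : ℝ) * Real.log (2 / (1 - γ)))}} := by
  have : Nonempty (Fin n) := ⟨⟨0, hn⟩⟩
  have := hindep.isProbabilityMeasure
  have hX : IsBernoulliSample μ p X := ⟨hXmeas, hX01, hindep, hlaw⟩
  set ε := (1 / n : ℝ) * log (2 / (1 - γ))
  have h1γ : 0 < 1 - γ := sub_pos.2 hγ.2
  have hε : 0 ≤ ε :=
    mul_nonneg (by positivity) (log_nonneg ((le_div_iff₀ h1γ).2 (by linarith [hγ.1])))
  have hexp : 2 * exp (-(n * ε)) = 1 - γ := by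
    have hn' : (n : ℝ) ≠ 0 := by positivity
    have hnε : (n : ℝ) * ε = log (2 / (1 - γ)) := by
      simp only [ε]
      field_simp
    rw [hnε, exp_neg, exp_log (by positivity)]
    field_simp
  have hbad := hX.measure_lt_bernKLReal_sampleMean_le hp hε
  rw [Fintype.card_fin, ← ENNReal.ofReal_ofNat, ← ENNReal.ofReal_mul zero_le_two, hexp] at hbad
  have hgood : {ω | ε < bernKLReal (sampleMean X ω) p}ᶜ ⊆
      {ω | p ∈ {u : ℝ | u ∈ Set.Icc (0 : ℝ) 1 ∧
        bernKL ((∑ i, X i ω) / n) u ≤ ENNReal.ofReal ε}} := by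
    intro ω hω
    simp only [Set.mem_compl_iff, Set.mem_ofPred_eq, not_lt, sampleMean, Fintype.card_fin] at hω
    exact ⟨Set.Ioo_subset_Icc_self hp,
      (bernKL_eq_ofReal_bernKLReal _ hp).trans_le (ENNReal.ofReal_le_ofReal hω)⟩
  calc ENNReal.ofReal γ = 1 - ENNReal.ofReal (1 - γ) := by
        rw [← ENNReal.ofReal_one, ← ENNReal.ofReal_sub _ h1γ.le, sub_sub_cancel]
    _ ≤ 1 - μ {ω | ε < bernKLReal (sampleMean X ω) p} := tsub_le_tsub_left hbad 1
    _ ≤ μ {ω | ε < bernKLReal (sampleMean X ω) p}ᶜ := by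
        rw [tsub_le_iff_left, ← measure_univ (μ := μ)]
        exact measure_univ_le_add_compl _
    _ ≤ _ := measure_mono hgood

/-- **Bernoulli KL confidence set.**
Let `X_1,…,X_n` be i.i.d. Bernoulli with mean `p ∈ (0,1)` and empirical mean `p̂`.  For
any `γ ∈ (0,1)`, the confidence set `C(p̂) = {u ∈ [0,1] : KL(p̂ ‖ u) ≤ (1/n)·log(2/(1−γ))}`
satisfies `ℙ(p ∈ C(p̂)) ≥ γ`. -/
theorem bernoulli_confidence_set
    {Ω : Type*} [MeasurableSpace Ω] (μ : Measure Ω) [IsProbabilityMeasure μ]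
    (n : ℕ) (hn : 0 < n) (p : ℝ) (hp : p ∈ Set.Ioo (0 : ℝ) 1)
    (X : Fin n → Ω → ℝ) (hXmeas : ∀ i, Measurable (X i))
    (hX01 : ∀ i ω, X i ω = 0 ∨ X i ω = 1)
    (hindep : iIndepFun X μ)
    (hlaw : ∀ i, μ {ω | X i ω = 1} = ENNReal.ofReal p)
    (γ : ℝ) (hγ : γ ∈ Set.Ioo (0 : ℝ) 1) :
    ENNReal.ofReal γ ≤
      μ {ω | p ∈ {u : ℝ | u ∈ Set.Icc (0 : ℝ) 1 ∧
          bernKL ((∑ i, X i ω) / n) u ≤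
            ENNReal.ofReal ((1 / n : ℝ) * Real.log (2 / (1 - γ)))}} :=
  bernoulli_confidence_set_general μ n hn p hp X hXmeas hX01 hindep hlaw γ hγ
end

section
/- Let P ∈ P^d be a probability vector, p̂ the empirical distribution of n i.i.d. categorical samples from P, and suppose d ≤ (n·C₀/4)^{1/3} with C₀ = e³/(2π). For any γ ∈ (0,1), the confidence set C(p̂) = { u ∈ P^d : KL(p̂ ‖ u) ≤ ((d−1)/n)·log(2(d−1)/(1−γ)) } satisfies ℙ( P ∈ C(p̂) ) ≥ γ. -/
/-!
Write `m_i` for the number of samples in category `i`, `s_k = Σ_{i ≥ k} m_i` and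
`Q_k = Σ_{i ≥ k} P_i`. Revealing the categories one at a time, the chain rule splits
`n · KL(p̂ ‖ P)` into the `d - 1` binary terms `s_k · kl(m_k / s_k ‖ P_k / Q_k)`, `k < d - 1`.
Given which samples fall into the categories `≥ k`, the count `m_k` is binomial with `s_k`
trials and success probability `P_k / Q_k`, so by the two-sided Chernoff bound each term exceeds
`L` with probability at most `2 e^{-L}`. If `KL(p̂ ‖ P) > (d - 1) L / n` some term exceeds `L`,
and a union bound with `L = log (2 (d - 1) / (1 - γ))` bounds the failure probability by `1 - γ`.
-/

open MeasureTheory ProbabilityTheory Real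

/-- Multinomial Kullback–Leibler divergence `KL(u ‖ v) = Σ_i u_i·log(u_i/v_i)`, with the
conventions `0·log 0 = 0` and `KL(u ‖ v) = +∞` if some `u_i > 0 = v_i`. -/
noncomputable def multiKL {d : ℕ} (u v : Fin d → ℝ) : ENNReal :=
  if ∃ i, 0 < u i ∧ v i = 0 then ⊤
  else ENNReal.ofReal (∑ i, u i * Real.log (u i / v i))

/-- The empirical distribution of the categorical samples `X_1(ω),…,X_n(ω)`: category `i`
receives the fraction of the `n` samples equal to `i`. -/
noncomputable def empDist {Ω : Type*} {d n : ℕ} (X : Fin n → Ω → Fin d) (ω : Ω)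
    (i : Fin d) : ℝ :=
  ((Finset.univ.filter (fun j : Fin n => X j ω = i)).card : ℝ) / n

open Finset Filter

/-- `s · kl(m / s ‖ r)` for the binary divergence `kl`; `Real.log 0 = 0` provides the convention
`0 · log 0 = 0`. -/
noncomputable def binKL (r s m : ℝ) : ℝ :=
  m * log (m / (s * r)) + (s - m) * log ((s - m) / (s * (1 - r)))

theorem binKL_symm (r s m : ℝ) : binKL r s m = binKL (1 - r) s (s - m) := by
  simp only [binKL, sub_sub_cancel]
  ring

theorem binKL_zero_nonpos {s m : ℝ} (hm : 0 ≤ m) (hms : m ≤ s) : binKL 0 s m ≤ 0 := by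
  simp only [binKL, mul_zero, div_zero, log_zero, sub_zero, mul_one, zero_add]
  exact mul_nonpos_of_nonneg_of_nonpos (by linarith)
    (log_nonpos (div_nonneg (by linarith) (by linarith))
      (div_le_one_of_le₀ (by linarith) (by linarith)))

theorem binKL_one_nonpos {s m : ℝ} (hm : 0 ≤ m) (hms : m ≤ s) : binKL 1 s m ≤ 0 := by
  rw [binKL_symm, sub_self]
  exact binKL_zero_nonpos (by linarith) (by linarith)

theorem binKL_self (r s : ℝ) : binKL r s s = -(s * log r) := by
  rcases eq_or_ne s 0 with rfl | hs
  · simp [binKL]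
  rcases eq_or_ne r 0 with rfl | hr
  · simp [binKL]
  rw [binKL, sub_self, zero_mul, add_zero, div_mul_cancel_left₀ hs, log_inv]
  ring

theorem mul_log_div_mul {m a b : ℝ} (h : m ≠ 0 → a ≠ 0 ∧ b ≠ 0) :
    m * log (m / (a * b)) = m * log (m / b) - m * log a := by
  rcases eq_or_ne m 0 with rfl | hm
  · simp
  obtain ⟨ha, hb⟩ := h hm
  rw [log_div hm (mul_ne_zero ha hb), log_mul ha hb, log_div hm hb]
  ring

theorem binKL_add_eq {m s p Q : ℝ} (hm : 0 ≤ m) (hs : 0 ≤ s) (hp : 0 ≤ p) (hQ : 0 ≤ Q)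
    (hmp : m ≠ 0 → p ≠ 0) (hsQ : s ≠ 0 → Q ≠ 0) :
    binKL (p / (p + Q)) (m + s) m =
      m * log (m / p) + s * log (s / Q) - (m + s) * log ((m + s) / (p + Q)) := by
  rcases eq_or_ne (p + Q) 0 with hpQ | hpQ
  · have hp0 : p = 0 := by linarith
    have hm0 : m = 0 := by by_contra h; exact hmp h hp0
    have hs0 : s = 0 := by by_contra h; exact hsQ h (by linarith)
    simp [binKL, hm0, hs0]
  have h1r : 1 - p / (p + Q) = Q / (p + Q) := by field_simp; ring
  rw [binKL, add_sub_cancel_left, h1r, mul_div_assoc', mul_div_assoc', mul_div_right_comm,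
    mul_div_right_comm (m + s),
    mul_log_div_mul fun h => ⟨div_ne_zero (by positivity) hpQ, hmp h⟩,
    mul_log_div_mul fun h => ⟨div_ne_zero (by positivity) hpQ, hsQ h⟩]
  ring

theorem exp_neg_mul_mul_rpow_eq_exp_neg_binKL {r a s t : ℝ} (hr : r ∈ Set.Ioo 0 1)
    (ha : 0 < a) (has : a < s) (ht : exp t = a * (1 - r) / ((s - a) * r)) :
    exp (-(t * a)) * (r * exp t + (1 - r)) ^ s = exp (-binKL r s a) := by
  obtain ⟨hr0, hr1⟩ := hr
  have h1r : 0 < 1 - r := by linarith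
  have hsa : 0 < s - a := by linarith
  have hs : 0 < s := by linarith
  have hmgf : r * exp t + (1 - r) = (1 - r) * s / (s - a) := by
    rw [ht]
    field_simp
    ring
  have ht' : t = log (a * (1 - r) / ((s - a) * r)) := by rw [← ht, log_exp]
  rw [hmgf, ← exp_log (by positivity : 0 < (1 - r) * s / (s - a)), ← exp_mul, ← exp_add, ht']
  congr 1
  simp only [binKL]
  rw [log_div (by positivity) (by positivity), log_mul (by positivity) (by positivity),
    log_div (by positivity) (by positivity), log_mul (by positivity) (by positivity),
    log_mul (by positivity) (by positivity), log_div (by positivity) (by positivity),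
    log_mul (by positivity) (by positivity), log_div (by positivity) (by positivity),
    log_mul (by positivity) (by positivity)]
  ring

theorem exists_exp_neg_mul_mul_pow_le {r L : ℝ} (hr : r ∈ Set.Ioo 0 1) {a s : ℕ}
    (hra : r * s ≤ a) (has : a ≤ s) (hL : L < binKL r s a) :
    ∃ t, 0 ≤ t ∧ exp (-(t * a)) * (r * exp t + (1 - r)) ^ s ≤ exp (-L) := by
  obtain ⟨hr0, hr1⟩ := hr
  rcases has.lt_or_eq with has | rfl
  · have hs : (0 : ℝ) < s := by exact_mod_cast (Nat.zero_le a).trans_lt has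
    have ha : (0 : ℝ) < a := lt_of_lt_of_le (mul_pos hr0 hs) hra
    have has' : (a : ℝ) < s := by exact_mod_cast has
    have hopt : 0 < a * (1 - r) / ((s - a) * r) := by
      have : 0 < (s : ℝ) - a := by linarith
      have : 0 < 1 - r := by linarith
      positivity
    refine ⟨log (a * (1 - r) / ((s - a) * r)), log_nonneg ?_, ?_⟩
    · rw [le_div_iff₀ (mul_pos (by linarith) hr0)]
      nlinarith
    · rw [← Real.rpow_natCast,
        exp_neg_mul_mul_rpow_eq_exp_neg_binKL ⟨hr0, hr1⟩ ha has' (exp_log hopt)]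
      exact exp_le_exp.2 (by linarith)
  · -- no optimal `t`: the bound decreases to `r ^ a = exp (-binKL r a a)` as `t → ∞`
    have hlim : Tendsto (fun t => (r + (1 - r) * exp (-t)) ^ a) atTop (nhds (r ^ a)) := by
      have := (tendsto_exp_neg_atTop_nhds_zero.const_mul (1 - r)).const_add r
      simpa using this.pow a
    have hra : r ^ a < exp (-L) := by
      rw [← exp_log (pow_pos hr0 a), log_pow, ← neg_neg ((a : ℝ) * log r), ← binKL_self]
      exact exp_lt_exp.2 (by linarith)
    obtain ⟨t, ht, hlt⟩ :=
      ((eventually_ge_atTop 0).and (hlim.eventually (gt_mem_nhds hra))).exists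
    refine ⟨t, ht, le_of_eq_of_le ?_ hlt.le⟩
    rw [← neg_mul, mul_comm (-t), exp_nat_mul, ← mul_pow, mul_add, mul_left_comm, ← exp_add,
      neg_add_cancel, exp_zero]
    ring

theorem sum_filter_le_exp_neg_mul_mul_sum {β : Type*} (s : Finset β) {w f : β → ℝ}
    (hw : ∀ x ∈ s, 0 ≤ w x) {t : ℝ} (ht : 0 ≤ t) (a : ℝ) :
    ∑ x ∈ s with a ≤ f x, w x ≤ exp (-(t * a)) * ∑ x ∈ s, w x * exp (t * f x) := by
  rw [mul_sum]
  calc ∑ x ∈ s with a ≤ f x, w x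
      ≤ ∑ x ∈ s with a ≤ f x, exp (-(t * a)) * (w x * exp (t * f x)) := by
        refine sum_le_sum fun x hx => ?_
        obtain ⟨hxs, hax⟩ := mem_filter.1 hx
        rw [mul_left_comm, ← exp_add]
        exact le_mul_of_one_le_right (hw x hxs) (one_le_exp (by nlinarith))
    _ ≤ ∑ x ∈ s, exp (-(t * a)) * (w x * exp (t * f x)) :=
        sum_le_sum_of_subset_of_nonneg (filter_subset _ _) fun x hx _ => by
          have := hw x hx
          positivity

section Sampling

variable {ι α : Type*} [Fintype ι] [DecidableEq α]

def hits (x : ι → α) (A : Finset α) : Finset ι := {j | x j ∈ A}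

theorem hits_subset_hits (x : ι → α) {E S : Finset α} (h : E ⊆ S) : hits x E ⊆ hits x S :=
  fun j => by simpa [hits] using fun hj => h hj

theorem card_hits_eq_sum (x : ι → α) (A : Finset α) :
    (#(hits x A) : ℝ) = ∑ v ∈ A, (#{j | x j = v} : ℝ) := by
  rw [hits, card_eq_sum_card_fiberwise (f := x) (t := A) fun j hj => by simpa using hj]
  push_cast
  refine sum_congr rfl fun v hv => ?_
  rw [filter_filter]
  congr 2
  ext j
  simp only [mem_filter, mem_univ, true_and, and_iff_right_iff_imp]
  rintro rfl
  exact hv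

variable [DecidableEq ι] [Fintype α]

theorem sum_hits_eq_prod_eq_pow_mul_pow {R : Type*} [CommSemiring R] (g : α → R)
    (S : Finset α) (T : Finset ι) :
    ∑ x : ι → α with hits x S = T, ∏ j, g (x j) =
      (∑ v ∈ S, g v) ^ #T * (∑ v ∈ Sᶜ, g v) ^ (Fintype.card ι - #T) := by
  have hfib : ({x : ι → α | hits x S = T} : Finset (ι → α)) =
      Fintype.piFinset fun j => if j ∈ T then S else Sᶜ := by
    ext x
    simp only [hits, mem_filter, mem_univ, true_and, Fintype.mem_piFinset, Finset.ext_iff]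
    refine forall_congr' fun j => ?_
    split_ifs with hj <;> simp [hj]
  rw [hfib, ← prod_univ_sum]
  simp only [apply_ite (fun A => ∑ v ∈ A, g v)]
  rw [prod_ite, prod_const, prod_const, filter_mem_eq_inter, univ_inter, filter_not,
    filter_mem_eq_inter, univ_inter, card_sdiff, card_univ, inter_univ]

theorem sum_hits_eq_prod_mul_exp_eq (q : α → ℝ) {E S : Finset α} (hES : E ⊆ S) (T : Finset ι)
    (t : ℝ) :
    ∑ x : ι → α with hits x S = T, (∏ j, q (x j)) * exp (t * #(hits x E)) =
      ((∑ v ∈ E, q v) * exp t + ∑ v ∈ S \ E, q v) ^ #T *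
        (∑ v ∈ Sᶜ, q v) ^ (Fintype.card ι - #T) := by
  set g : α → ℝ := fun v => q v * exp (t * if v ∈ E then 1 else 0)
  have hprod : ∀ x : ι → α, (∏ j, q (x j)) * exp (t * #(hits x E)) = ∏ j, g (x j) := by
    intro x
    rw [hits, natCast_card_filter, mul_sum, exp_sum, ← prod_mul_distrib]
  have hS : ∑ v ∈ S, g v = (∑ v ∈ E, q v) * exp t + ∑ v ∈ S \ E, q v := by
    rw [← sum_sdiff hES, add_comm, sum_mul]
    congr 1
    · exact sum_congr rfl fun v hv => by simp [g, hv]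
    · exact sum_congr rfl fun v hv => by simp [g, (mem_sdiff.1 hv).2]
  have hSc : ∑ v ∈ Sᶜ, g v = ∑ v ∈ Sᶜ, q v :=
    sum_congr rfl fun v hv => by
      have hvE : v ∉ E := fun h => mem_compl.1 hv (hES h)
      simp [g, hvE]
  simp only [hprod]
  rw [sum_hits_eq_prod_eq_pow_mul_pow, hS, hSc]

theorem sum_hits_eq_upper_tail_le {q : α → ℝ} (hq : ∀ v, 0 ≤ q v) {E S : Finset α}
    (hES : E ⊆ S) {r : ℝ} (hr : r ∈ Set.Ioo 0 1) (hE : ∑ v ∈ E, q v = r * ∑ v ∈ S, q v)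
    (T : Finset ι) (L : ℝ) :
    ∑ x : ι → α with hits x S = T ∧ r * #T ≤ #(hits x E) ∧ L < binKL r #T #(hits x E),
        ∏ j, q (x j) ≤
      exp (-L) * ((∑ v ∈ S, q v) ^ #T * (∑ v ∈ Sᶜ, q v) ^ (Fintype.card ι - #T)) := by
  set A := ({x : ι → α | hits x S = T ∧ r * #T ≤ #(hits x E) ∧
    L < binKL r #T #(hits x E)} : Finset (ι → α))
  have hw : ∀ x : ι → α, 0 ≤ ∏ j, q (x j) := fun x => prod_nonneg fun j _ => hq _
  have hmass : 0 ≤ (∑ v ∈ S, q v) ^ #T * (∑ v ∈ Sᶜ, q v) ^ (Fintype.card ι - #T) :=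
    mul_nonneg (pow_nonneg (sum_nonneg fun v _ => hq v) _)
      (pow_nonneg (sum_nonneg fun v _ => hq v) _)
  rcases A.eq_empty_or_nonempty with hA | hA
  · rw [hA, sum_empty]
    positivity
  -- The event lies in the single tail `a ≤ #(hits x E)` for its least hit count `a`, so one
  -- exponential tilt bounds it.
  obtain ⟨x₀, hx₀, hmin⟩ := exists_min_image A (fun x => #(hits x E)) hA
  obtain ⟨hx₀T, hra, hL⟩ := (mem_filter.1 hx₀).2
  obtain ⟨t, ht, hbound⟩ := exists_exp_neg_mul_mul_pow_le hr hra
    (hx₀T ▸ card_le_card (hits_subset_hits x₀ hES)) hL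
  calc ∑ x ∈ A, ∏ j, q (x j)
      ≤ ∑ x ∈ ({x : ι → α | hits x S = T} : Finset (ι → α)) with
          (#(hits x₀ E) : ℝ) ≤ #(hits x E), ∏ j, q (x j) := by
        refine sum_le_sum_of_subset_of_nonneg (fun x hx => ?_) fun x _ _ => hw x
        simp only [mem_filter, mem_univ, true_and]
        exact ⟨(mem_filter.1 hx).2.1, by exact_mod_cast hmin x hx⟩
    _ ≤ exp (-(t * #(hits x₀ E))) * ∑ x : ι → α with hits x S = T,
          (∏ j, q (x j)) * exp (t * #(hits x E)) :=
        sum_filter_le_exp_neg_mul_mul_sum _ (fun x _ => hw x) ht _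
    _ = exp (-(t * #(hits x₀ E))) * (r * exp t + (1 - r)) ^ #T *
          ((∑ v ∈ S, q v) ^ #T * (∑ v ∈ Sᶜ, q v) ^ (Fintype.card ι - #T)) := by
        rw [sum_hits_eq_prod_mul_exp_eq q hES, sum_sdiff_eq_sub hES, hE]
        generalize ∑ v ∈ S, q v = Q
        rw [show r * Q * exp t + (Q - r * Q) = Q * (r * exp t + (1 - r)) by ring, mul_pow]
        ring
    _ ≤ exp (-L) * ((∑ v ∈ S, q v) ^ #T * (∑ v ∈ Sᶜ, q v) ^ (Fintype.card ι - #T)) := by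
        gcongr

theorem sum_hits_eq_binKL_gt_le {q : α → ℝ} (hq : ∀ v, 0 ≤ q v) {E S : Finset α}
    (hES : E ⊆ S) {r : ℝ} (hr : r ∈ Set.Ioo 0 1) (hE : ∑ v ∈ E, q v = r * ∑ v ∈ S, q v)
    (T : Finset ι) (L : ℝ) :
    ∑ x : ι → α with hits x S = T ∧ L < binKL r #T #(hits x E), ∏ j, q (x j) ≤
      2 * exp (-L) * ((∑ v ∈ S, q v) ^ #T * (∑ v ∈ Sᶜ, q v) ^ (Fintype.card ι - #T)) := by
  have hw : ∀ x : ι → α, 0 ≤ ∏ j, q (x j) := fun x => prod_nonneg fun j _ => hq _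
  have hupper := sum_hits_eq_upper_tail_le hq hES hr hE T L
  -- The lower tail of the hits in `E` is the upper tail of the hits in `S \ E`.
  have hlower := sum_hits_eq_upper_tail_le hq sdiff_subset (r := 1 - r)
    ⟨by linarith [hr.2], by linarith [hr.1]⟩ (by rw [sum_sdiff_eq_sub hES, hE]; ring) T L
  rw [← sum_filter_add_sum_filter_not _ fun x => r * #T ≤ (#(hits x E) : ℝ)]
  refine (add_le_add (sum_le_sum_of_subset_of_nonneg ?_ fun x _ _ => hw x)
    (sum_le_sum_of_subset_of_nonneg ?_ fun x _ _ => hw x)).trans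
    ((add_le_add hupper hlower).trans_eq (by ring))
  · intro x hx
    simp only [mem_filter, mem_univ, true_and] at hx ⊢
    exact ⟨hx.1.1, hx.2, hx.1.2⟩
  · intro x hx
    simp only [mem_filter, mem_univ, true_and, not_le] at hx ⊢
    obtain ⟨⟨hxT, hL⟩, hlt⟩ := hx
    have hcnt : (#(hits x (S \ E)) : ℝ) = #T - #(hits x E) := by
      rw [card_hits_eq_sum, sum_sdiff_eq_sub hES, ← card_hits_eq_sum, ← card_hits_eq_sum, hxT]
    refine ⟨hxT, ?_, ?_⟩
    · rw [hcnt]; linarith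
    · rwa [hcnt, ← binKL_symm]

theorem sum_prod_binKL_gt_le {q : α → ℝ} (hq : ∀ v, 0 ≤ q v) (hq1 : ∑ v, q v = 1)
    {E S : Finset α} (hES : E ⊆ S) {L : ℝ} (hL : 0 ≤ L) :
    ∑ x : ι → α with L < binKL ((∑ v ∈ E, q v) / ∑ v ∈ S, q v) #(hits x S) #(hits x E),
        ∏ j, q (x j) ≤ 2 * exp (-L) := by
  set r := (∑ v ∈ E, q v) / ∑ v ∈ S, q v
  have hES' : ∑ v ∈ E, q v ≤ ∑ v ∈ S, q v :=
    sum_le_sum_of_subset_of_nonneg hES fun v _ _ => hq v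
  have hE0 : 0 ≤ ∑ v ∈ E, q v := sum_nonneg fun v _ => hq v
  by_cases hr : r ∈ Set.Ioo 0 1
  swap
  · -- for `r ∈ {0, 1}` the binary divergence is never positive
    have hr01 : r = 0 ∨ r = 1 := by
      have h0 : 0 ≤ r := div_nonneg hE0 (hE0.trans hES')
      have h1 : r ≤ 1 := div_le_one_of_le₀ hES' (hE0.trans hES')
      simp only [Set.mem_Ioo, not_and_or, not_lt] at hr
      rcases hr with h | h
      · exact Or.inl (le_antisymm h h0)
      · exact Or.inr (le_antisymm h1 h)
    rw [sum_eq_zero fun x hx => absurd (mem_filter.1 hx).2 ?_]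
    · positivity
    have hcnt : (#(hits x E) : ℝ) ≤ #(hits x S) := by
      exact_mod_cast card_le_card (hits_subset_hits x hES)
    rw [not_lt]
    rcases hr01 with h | h <;> rw [h]
    · exact (binKL_zero_nonpos (Nat.cast_nonneg _) hcnt).trans hL
    · exact (binKL_one_nonpos (Nat.cast_nonneg _) hcnt).trans hL
  have hS : 0 < ∑ v ∈ S, q v := by
    refine (hE0.trans hES').lt_of_ne fun h => ?_
    simp [r, ← h] at hr
  have hE : ∑ v ∈ E, q v = r * ∑ v ∈ S, q v := (div_mul_cancel₀ _ hS.ne').symm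
  have hfib : ∀ T : Finset ι,
      ({x : ι → α | L < binKL r #(hits x S) #(hits x E)} : Finset (ι → α)).filter
        (fun x => hits x S = T) =
      ({x : ι → α | hits x S = T ∧ L < binKL r #T #(hits x E)} : Finset (ι → α)) := by
    intro T
    ext x
    simp only [mem_filter, mem_univ, true_and]
    constructor
    · rintro ⟨h, rfl⟩; exact ⟨rfl, h⟩
    · rintro ⟨rfl, h⟩; exact ⟨h, rfl⟩
  calc _ = ∑ T : Finset ι, ∑ x ∈ ({x : ι → α | L < binKL r #(hits x S) #(hits x E)} :
          Finset (ι → α)) with hits x S = T, ∏ j, q (x j) :=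
        (sum_fiberwise _ _ _).symm
    _ ≤ ∑ T : Finset ι, 2 * exp (-L) *
          ((∑ v ∈ S, q v) ^ #T * (∑ v ∈ Sᶜ, q v) ^ (Fintype.card ι - #T)) :=
        sum_le_sum fun T _ => (hfib T).symm ▸ sum_hits_eq_binKL_gt_le hq hES hr hE T L
    _ = 2 * exp (-L) := by
      rw [← mul_sum, ← powerset_univ, ← card_univ, sum_pow_mul_eq_add_pow, add_comm,
        sum_compl_add_sum, hq1, one_pow, mul_one]

end Sampling

theorem sum_ne_zero_of_support_subset {β : Type*} {m p : β → ℝ} (hp : ∀ v, 0 ≤ p v)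
    (hmp : Function.support m ⊆ Function.support p) {A : Finset β} (h : ∑ v ∈ A, m v ≠ 0) :
    ∑ v ∈ A, p v ≠ 0 := by
  obtain ⟨v, hv, hmv⟩ := exists_ne_zero_of_sum_ne_zero h
  exact (sum_pos' (fun w _ => hp w) ⟨v, hv, (hp v).lt_of_ne' (hmp hmv)⟩).ne'

section ChainRule

variable {d : ℕ}

theorem pos_of_sum_eq_one {p : Fin d → ℝ} (hp1 : ∑ v, p v = 1) : 0 < d :=
  Nat.pos_of_ne_zero fun h => by subst h; simp at hp1

def valEq (k : ℕ) : Finset (Fin d) := {v | (v : ℕ) = k}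

def valGE (k : ℕ) : Finset (Fin d) := {v | k ≤ (v : ℕ)}

theorem valEq_subset_valGE (k : ℕ) : (valEq k : Finset (Fin d)) ⊆ valGE k := fun v hv => by
  simp_all [valEq, valGE]

theorem valEq_val (v : Fin d) : valEq (v : ℕ) = {v} := by
  ext w
  simp [valEq, Fin.val_inj]

theorem valGE_zero : (valGE 0 : Finset (Fin d)) = univ := by
  simp [valGE]

theorem valGE_self : (valGE d : Finset (Fin d)) = ∅ := by
  ext v
  simp [valGE, v.isLt]

theorem sum_valGE {M : Type*} [AddCommMonoid M] (f : Fin d → M) (k : ℕ) :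
    ∑ v ∈ valGE k, f v = ∑ v ∈ valEq k, f v + ∑ v ∈ valGE (k + 1), f v := by
  rw [← sum_union]
  · congr 1
    ext v
    simp only [valGE, valEq, mem_union, mem_filter, mem_univ, true_and]
    omega
  · simp only [valEq, valGE, disjoint_filter]
    omega

theorem sum_mul_log_div_eq_sum_binKL {m p : Fin d → ℝ} (hm : ∀ v, 0 ≤ m v)
    (hp : ∀ v, 0 ≤ p v) (hmp : Function.support m ⊆ Function.support p) (hp1 : ∑ v, p v = 1) :
    ∑ v, m v * log (m v / ((∑ w, m w) * p v)) =
      ∑ k ∈ range (d - 1), binKL ((∑ v ∈ valEq k, p v) / ∑ v ∈ valGE k, p v)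
        (∑ v ∈ valGE k, m v) (∑ v ∈ valEq k, m v) := by
  have hd : d - 1 + 1 = d := Nat.succ_pred_eq_of_pos (pos_of_sum_eq_one hp1)
  set c : ℕ → ℝ := fun k =>
    (∑ v ∈ valEq k, m v) * log ((∑ v ∈ valEq k, m v) / ∑ v ∈ valEq k, p v)
  set G : ℕ → ℝ := fun k =>
    (∑ v ∈ valGE k, m v) * log ((∑ v ∈ valGE k, m v) / ∑ v ∈ valGE k, p v)
  have hstep : ∀ k, binKL ((∑ v ∈ valEq k, p v) / ∑ v ∈ valGE k, p v)
      (∑ v ∈ valGE k, m v) (∑ v ∈ valEq k, m v) = c k + (G (k + 1) - G k) := by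
    intro k
    simp only [c, G, sum_valGE m k, sum_valGE p k]
    rw [binKL_add_eq (sum_nonneg fun v _ => hm v) (sum_nonneg fun v _ => hm v)
      (sum_nonneg fun v _ => hp v) (sum_nonneg fun v _ => hp v)
      (sum_ne_zero_of_support_subset hp hmp) (sum_ne_zero_of_support_subset hp hmp)]
    ring
  have hlast : G (d - 1) = c (d - 1) := by
    simp only [G, c, sum_valGE _ (d - 1), hd, valGE_self, sum_empty, add_zero]
  have hfirst : G 0 = (∑ w, m w) * log (∑ w, m w) := by
    simp only [G, valGE_zero, hp1, div_one]
  have hc : ∑ k ∈ range d, c k = ∑ v, m v * log (m v / p v) := by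
    rw [← Fin.sum_univ_eq_sum_range]
    simp only [c, valEq_val, sum_singleton]
  have hM : ∀ v, m v * log (m v / ((∑ w, m w) * p v)) =
      m v * log (m v / p v) - m v * log (∑ w, m w) := fun v =>
    mul_log_div_mul fun h =>
      ⟨(sum_pos' (fun w _ => hm w) ⟨v, mem_univ v, (hm v).lt_of_ne' h⟩).ne', hmp h⟩
  rw [sum_congr rfl fun k _ => hstep k, sum_add_distrib, sum_range_sub, hlast, hfirst,
    ← add_sub_assoc, ← sum_range_succ, hd, hc, sum_congr rfl fun v _ => hM v,
    sum_sub_distrib, ← sum_mul]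

end ChainRule

section Samples

variable {d n : ℕ}

/-- The `k`-th term of the chain rule: among the samples in categories `≥ k`, the number in
category `k` is conditionally binomial. -/
noncomputable def condBinKL (P : Fin d → ℝ) (x : Fin n → Fin d) (k : ℕ) : ℝ :=
  binKL ((∑ v ∈ valEq k, P v) / ∑ v ∈ valGE k, P v) #(hits x (valGE k)) #(hits x (valEq k))

theorem natCast_mul_sum_mul_log_eq_sum_condBinKL {P : Fin d → ℝ} (hP : ∀ i, 0 ≤ P i)
    (hP1 : ∑ i, P i = 1) (hn : n ≠ 0) {x : Fin n → Fin d} (hx : ∀ j, P (x j) ≠ 0) :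
    n * ∑ i, (#{j | x j = i} : ℝ) / n * log ((#{j | x j = i} : ℝ) / n / P i) =
      ∑ k ∈ range (d - 1), condBinKL P x k := by
  have hsum : ∑ i, (#{j | x j = i} : ℝ) = n := by
    rw [← card_hits_eq_sum]
    simp [hits]
  have hsupp : Function.support (fun i => (#{j | x j = i} : ℝ)) ⊆ Function.support P := by
    intro i hi
    obtain ⟨j, hj⟩ := card_ne_zero.1 (Nat.cast_ne_zero.1 hi)
    exact (mem_filter.1 hj).2 ▸ hx j
  simp only [condBinKL, card_hits_eq_sum]
  rw [← sum_mul_log_div_eq_sum_binKL (fun i => Nat.cast_nonneg _) hP hsupp hP1, hsum, mul_sum]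
  refine sum_congr rfl fun i _ => ?_
  rw [div_div]
  field_simp

theorem exists_lt_condBinKL_of_not_multiKL_le {P : Fin d → ℝ} (hP : ∀ i, 0 ≤ P i)
    (hP1 : ∑ i, P i = 1) (hn : n ≠ 0) {L : ℝ} {x : Fin n → Fin d} (hx : ∀ j, P (x j) ≠ 0)
    (hKL : ¬ multiKL (fun i => (#{j | x j = i} : ℝ) / n) P ≤
      ENNReal.ofReal (((d : ℝ) - 1) / n * L)) :
    ∃ k ∈ range (d - 1), L < condBinKL P x k := by
  have hconst : ∑ _k ∈ range (d - 1), L = ((d : ℝ) - 1) * L := by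
    rw [sum_const, card_range, nsmul_eq_mul, Nat.cast_pred (pos_of_sum_eq_one hP1)]
  have hfinite : ¬ ∃ i, 0 < (#{j | x j = i} : ℝ) / n ∧ P i = 0 := by
    rintro ⟨i, hi, hPi⟩
    obtain ⟨j, hj⟩ := card_pos.1 (Nat.cast_pos.1 (pos_of_mul_pos_left hi (by positivity)))
    exact (mem_filter.1 hj).2 ▸ hx j <| hPi
  rw [multiKL, if_neg hfinite, ENNReal.ofReal_le_ofReal_iff', not_or, not_le] at hKL
  have hlt := mul_lt_mul_of_pos_left hKL.1 (by positivity : (0 : ℝ) < n)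
  rw [natCast_mul_sum_mul_log_eq_sum_condBinKL hP hP1 hn hx, mul_comm, div_mul_eq_mul_div,
    div_mul_cancel₀ _ (Nat.cast_ne_zero.2 hn), ← hconst] at hlt
  exact exists_lt_of_sum_lt hlt

theorem sum_prod_not_multiKL_le {P : Fin d → ℝ} (hP : ∀ i, 0 ≤ P i) (hP1 : ∑ i, P i = 1)
    (hn : n ≠ 0) {L : ℝ} (hL : 0 ≤ L) :
    ∑ x : Fin n → Fin d with ¬ multiKL (fun i => (#{j | x j = i} : ℝ) / n) P ≤
        ENNReal.ofReal (((d : ℝ) - 1) / n * L), ∏ j, P (x j) ≤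
      ((d : ℝ) - 1) * (2 * exp (-L)) := by
  have hw : ∀ x : Fin n → Fin d, 0 ≤ ∏ j, P (x j) := fun x => prod_nonneg fun j _ => hP _
  have hite : ∀ k x, 0 ≤ if L < condBinKL P x k then ∏ j, P (x j) else 0 := fun k x => by
    split_ifs
    exacts [hw x, le_rfl]
  have hcover : ∀ x : Fin n → Fin d, ¬ multiKL (fun i => (#{j | x j = i} : ℝ) / n) P ≤
      ENNReal.ofReal (((d : ℝ) - 1) / n * L) →
      ∏ j, P (x j) ≤ ∑ k ∈ range (d - 1), if L < condBinKL P x k then ∏ j, P (x j) else 0 := by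
    intro x hx
    by_cases hx0 : ∏ j, P (x j) = 0
    · exact hx0 ▸ sum_nonneg fun k _ => hite k x
    obtain ⟨k, hk, hLk⟩ := exists_lt_condBinKL_of_not_multiKL_le hP hP1 hn
      (fun j => (prod_ne_zero_iff.1 hx0) j (mem_univ j)) hx
    exact (if_pos hLk).symm.le.trans (single_le_sum (fun k _ => hite k x) hk)
  calc _ ≤ ∑ x, ∑ k ∈ range (d - 1), if L < condBinKL P x k then ∏ j, P (x j) else 0 :=
        (sum_le_sum fun x hx => hcover x (mem_filter.1 hx).2).trans
          (sum_le_sum_of_subset_of_nonneg (filter_subset _ _) fun x _ _ =>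
            sum_nonneg fun k _ => hite k x)
    _ = ∑ k ∈ range (d - 1), ∑ x : Fin n → Fin d with L < condBinKL P x k, ∏ j, P (x j) := by
        rw [sum_comm]
        simp only [sum_filter]
    _ ≤ ∑ _k ∈ range (d - 1), 2 * exp (-L) :=
        sum_le_sum fun k _ => sum_prod_binKL_gt_le hP hP1 (valEq_subset_valGE k) hL
    _ = ((d : ℝ) - 1) * (2 * exp (-L)) := by
        rw [sum_const, card_range, nsmul_eq_mul, Nat.cast_pred (pos_of_sum_eq_one hP1)]

end Samples

section Probability

variable {Ω ι α : Type*} [MeasurableSpace Ω] {μ : Measure Ω} [Fintype ι] [MeasurableSpace α]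
  [MeasurableSingletonClass α] {X : ι → Ω → α} {P : α → ℝ}

theorem measure_forall_eq_eq_prod (hX : iIndepFun X μ)
    (hlaw : ∀ j a, μ {ω | X j ω = a} = ENNReal.ofReal (P a)) (x : ι → α) :
    μ {ω | ∀ j, X j ω = x j} = ∏ j, ENNReal.ofReal (P (x j)) := by
  have : {ω | ∀ j, X j ω = x j} = ⋂ j, X j ⁻¹' {x j} := by
    ext ω
    simp
  rw [this, hX.meas_iInter fun j => ⟨{x j}, measurableSet_singleton _, rfl⟩]
  exact prod_congr rfl fun j _ => hlaw j (x j)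

theorem measure_mem_le_ofReal_sum_prod (hX : iIndepFun X μ)
    (hlaw : ∀ j a, μ {ω | X j ω = a} = ENNReal.ofReal (P a)) (hP : ∀ a, 0 ≤ P a)
    (B : Finset (ι → α)) :
    μ {ω | (fun j => X j ω) ∈ B} ≤ ENNReal.ofReal (∑ x ∈ B, ∏ j, P (x j)) := by
  have hcover : {ω | (fun j => X j ω) ∈ B} ⊆ ⋃ x ∈ B, {ω | ∀ j, X j ω = x j} :=
    fun ω hω => Set.mem_biUnion hω fun _ => rfl
  rw [ENNReal.ofReal_sum_of_nonneg fun x _ => prod_nonneg fun j _ => hP _]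
  refine (measure_mono hcover).trans ((measure_biUnion_finset_le B _).trans_eq ?_)
  refine sum_congr rfl fun x _ => ?_
  rw [measure_forall_eq_eq_prod hX hlaw, ENNReal.ofReal_prod_of_nonneg fun j _ => hP _]

theorem ofReal_le_measure_of_measure_compl_le [IsProbabilityMeasure μ] {s : Set Ω} {γ : ℝ}
    (hγ0 : 0 ≤ γ) (hγ1 : γ ≤ 1) (h : μ sᶜ ≤ ENNReal.ofReal (1 - γ)) :
    ENNReal.ofReal γ ≤ μ s := by
  have hsplit : ENNReal.ofReal γ + ENNReal.ofReal (1 - γ) = 1 := by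
    rw [← ENNReal.ofReal_add hγ0 (by linarith), add_sub_cancel, ENNReal.ofReal_one]
  refine (ENNReal.add_le_add_iff_right (ENNReal.ofReal_ne_top (r := 1 - γ))).1 ?_
  calc ENNReal.ofReal γ + ENNReal.ofReal (1 - γ) = μ (s ∪ sᶜ) := by
        rw [hsplit, Set.union_compl_self, measure_univ]
    _ ≤ μ s + μ sᶜ := measure_union_le _ _
    _ ≤ μ s + ENNReal.ofReal (1 - γ) := by gcongr

end Probability

theorem log_two_mul_natCast_div_nonneg (k : ℕ) {δ : ℝ} (hδ0 : 0 < δ) (hδ1 : δ ≤ 1) :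
    0 ≤ log (2 * k / δ) := by
  rcases Nat.eq_zero_or_pos k with rfl | hk
  · simp
  refine log_nonneg ((one_le_div hδ0).2 ?_)
  have : (1 : ℝ) ≤ k := Nat.one_le_cast.2 hk
  linarith

theorem mul_two_mul_exp_neg_log_le {c δ : ℝ} (hc : 0 ≤ c) (hδ : 0 < δ) :
    c * (2 * exp (-log (2 * c / δ))) ≤ δ := by
  rcases hc.eq_or_lt with rfl | hc
  · simpa using hδ.le
  rw [exp_neg, exp_log (by positivity)]
  field_simp
  rfl

theorem multinomial_confidence_set_general
    {Ω : Type*} [MeasurableSpace Ω] (μ : Measure Ω) [IsProbabilityMeasure μ]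
    (d n : ℕ) (hn : 0 < n)
    -- `P` is in the simplex `P^d`
    (P : Fin d → ℝ) (hP01 : ∀ i, P i ∈ Set.Icc (0 : ℝ) 1) (hPsum : ∑ i, P i = 1)
    -- i.i.d. categorical samples with distribution `P`
    (X : Fin n → Ω → Fin d)
    (hindep : iIndepFun X μ)
    (hlaw : ∀ j i, μ {ω | X j ω = i} = ENNReal.ofReal (P i))
    (γ : ℝ) (hγ : γ ∈ Set.Ioo (0 : ℝ) 1) :
    ENNReal.ofReal γ ≤
      μ {ω | P ∈ {u : Fin d → ℝ | (∀ i, u i ∈ Set.Icc (0 : ℝ) 1) ∧ ∑ i, u i = 1 ∧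
          multiKL (empDist X ω) u ≤
            ENNReal.ofReal ((((d : ℝ) - 1) / n) * Real.log (2 * ((d : ℝ) - 1) / (1 - γ)))}} := by
  obtain ⟨hγ0, hγ1⟩ := hγ
  have hP0 : ∀ i, 0 ≤ P i := fun i => (hP01 i).1
  have hd : ((d - 1 : ℕ) : ℝ) = d - 1 := Nat.cast_pred (pos_of_sum_eq_one hPsum)
  have hL : 0 ≤ log (2 * ((d : ℝ) - 1) / (1 - γ)) :=
    hd ▸ log_two_mul_natCast_div_nonneg (d - 1) (by linarith) (by linarith)
  refine ofReal_le_measure_of_measure_compl_le hγ0.le hγ1.le ?_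
  calc _ = μ {ω | (fun j => X j ω) ∈ ({x | ¬ multiKL (fun i => (#{j | x j = i} : ℝ) / n) P ≤
          ENNReal.ofReal (((d : ℝ) - 1) / n * log (2 * ((d : ℝ) - 1) / (1 - γ)))} :
          Finset (Fin n → Fin d))} := by
        congr 1
        ext ω
        simp only [Set.mem_compl_iff, Set.mem_ofPred_eq, mem_filter, mem_univ, true_and]
        exact not_congr ⟨fun h => h.2.2, fun h => ⟨hP01, hPsum, h⟩⟩
    _ ≤ _ := measure_mem_le_ofReal_sum_prod hindep hlaw hP0 _
    _ ≤ _ := ENNReal.ofReal_le_ofReal (sum_prod_not_multiKL_le hP0 hPsum hn.ne' hL)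
    _ ≤ _ := ENNReal.ofReal_le_ofReal
        (mul_two_mul_exp_neg_log_le (hd ▸ Nat.cast_nonneg _) (by linarith))

/-- **Multinomial KL confidence set.**
Let `P ∈ P^d` be a probability vector, `p̂` the empirical distribution of `n` i.i.d.
categorical samples from `P`, and suppose `d ≤ (n·C₀/4)^{1/3}` with `C₀ = e³/(2π)`.  For any
`γ ∈ (0,1)`, the confidence set
`C(p̂) = {u ∈ P^d : KL(p̂ ‖ u) ≤ ((d−1)/n)·log(2(d−1)/(1−γ))}` satisfies
`ℙ(P ∈ C(p̂)) ≥ γ`. -/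
theorem multinomial_confidence_set
    {Ω : Type*} [MeasurableSpace Ω] (μ : Measure Ω) [IsProbabilityMeasure μ]
    (d n : ℕ) (hn : 0 < n)
    -- `P` is in the simplex `P^d`
    (P : Fin d → ℝ) (hP01 : ∀ i, P i ∈ Set.Icc (0 : ℝ) 1) (hPsum : ∑ i, P i = 1)
    -- i.i.d. categorical samples with distribution `P`
    (X : Fin n → Ω → Fin d) (hXmeas : ∀ j, Measurable (X j))
    (hindep : iIndepFun X μ)
    (hlaw : ∀ j i, μ {ω | X j ω = i} = ENNReal.ofReal (P i))
    -- the dimension condition `d ≤ (n·C₀/4)^{1/3}` with `C₀ = e³/(2π)`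
    (hd : (d : ℝ) ≤ ((n : ℝ) * (Real.exp 3 / (2 * Real.pi)) / 4) ^ ((1 : ℝ) / 3))
    (γ : ℝ) (hγ : γ ∈ Set.Ioo (0 : ℝ) 1) :
    ENNReal.ofReal γ ≤
      μ {ω | P ∈ {u : Fin d → ℝ | (∀ i, u i ∈ Set.Icc (0 : ℝ) 1) ∧ ∑ i, u i = 1 ∧
          multiKL (empDist X ω) u ≤
            ENNReal.ofReal ((((d : ℝ) - 1) / n) * Real.log (2 * ((d : ℝ) - 1) / (1 - γ)))}} :=
  multinomial_confidence_set_general μ d n hn P hP01 hPsum X hindep hlaw γ hγ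
end
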